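/- arXiv:1402.4183 — 3 statements merged into one kernel-verified Lean document; each statement's English description precedes it below -/
import Mathlib

section
/- Let x be an assignment of n terminal nodes to k hubs, i.e., x_{is} ∈ {0,1} with Σ_s x_{is} = 1 for each i, and let Y^i_{st} (for s ≠ t) be the flow from city i routed from hub s to hub t, defined by Y^i_{st} = x_{is} · Σ_{j} d_{ij} x_{jt}. Then for every city i and hub s: Σ_{t≠s} Y^i_{st} + Σ_{t≠s} Y^i_{ts} = Σ_j d_{ij} |x_{is} − x_{js}|. -/
/-! Since city `i` sits at exactly one hub, the flow it sends out of `s` is `d i j` exactly when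
`i` is at `s` and `j` is not, and the flow it sends into `s` is `d i j` exactly when `j` is at `s`
and `i` is not; for 0/1 values these two cases are `|x i s - x j s|`. -/

open Finset

theorem abs_sub_eq_of_mem_zero_one {R : Type*} [Ring R] [LinearOrder R] [IsOrderedRing R]
    {a b : R} (ha : a = 0 ∨ a = 1) (hb : b = 0 ∨ b = 1) :
    |a - b| = a * (1 - b) + (1 - a) * b := by
  rcases ha with rfl | rfl <;> rcases hb with rfl | rfl <;> norm_num

section Flow

variable {ι κ R : Type*} [Fintype κ] [DecidableEq κ] [CommRing R] {x : ι → κ → R}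

theorem sum_filter_ne_eq_one_sub (hxsum : ∀ i, ∑ s, x i s = 1) (i : ι) (s : κ) :
    ∑ t ∈ univ.filter (· ≠ s), x i t = 1 - x i s := by
  rw [filter_ne', sum_erase_eq_sub (mem_univ s), hxsum]

variable [Fintype ι]

theorem sum_filter_ne_outflow (hxsum : ∀ i, ∑ s, x i s = 1) (d : ι → ι → R) (i : ι) (s : κ) :
    ∑ t ∈ univ.filter (· ≠ s), x i s * ∑ j, d i j * x j t
      = ∑ j, d i j * (x i s * (1 - x j s)) := by
  rw [← mul_sum, sum_comm, mul_sum]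
  refine sum_congr rfl fun j _ => ?_
  rw [← mul_sum, sum_filter_ne_eq_one_sub hxsum]
  ring

theorem sum_filter_ne_inflow (hxsum : ∀ i, ∑ s, x i s = 1) (d : ι → ι → R) (i : ι) (s : κ) :
    ∑ t ∈ univ.filter (· ≠ s), x i t * ∑ j, d i j * x j s
      = ∑ j, d i j * ((1 - x i s) * x j s) := by
  rw [← sum_mul, sum_filter_ne_eq_one_sub hxsum, mul_sum]
  exact sum_congr rfl fun j _ => by ring

end Flow

theorem stmt0_general (n k : ℕ) (d : Fin n → Fin n → ℝ) (x : Fin n → Fin k → ℝ)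
    (hx01 : ∀ i s, x i s = 0 ∨ x i s = 1)
    (hxsum : ∀ i, ∑ s, x i s = 1)
    (Y : Fin n → Fin k → Fin k → ℝ)
    (hY : ∀ i s t, s ≠ t → Y i s t = x i s * ∑ j, d i j * x j t)
    (i : Fin n) (s : Fin k) :
    (∑ t ∈ univ.filter (· ≠ s), Y i s t) + (∑ t ∈ univ.filter (· ≠ s), Y i t s)
      = ∑ j, d i j * |x i s - x j s| := by
  have hout : ∑ t ∈ univ.filter (· ≠ s), Y i s t = ∑ t ∈ univ.filter (· ≠ s),
      x i s * ∑ j, d i j * x j t :=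
    sum_congr rfl fun t ht => hY i s t (mem_filter.mp ht).2.symm
  have hin : ∑ t ∈ univ.filter (· ≠ s), Y i t s = ∑ t ∈ univ.filter (· ≠ s),
      x i t * ∑ j, d i j * x j s :=
    sum_congr rfl fun t ht => hY i t s (mem_filter.mp ht).2
  rw [hout, hin, sum_filter_ne_outflow hxsum, sum_filter_ne_inflow hxsum, ← sum_add_distrib]
  refine sum_congr rfl fun j _ => ?_
  rw [← mul_add, abs_sub_eq_of_mem_zero_one (hx01 i s) (hx01 j s)]

/-- Lemma 1 (flow identity): for the canonical flows
`Y i s t = x i s * ∑ j, d i j * x j t` (for `s ≠ t`), the total flow through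
hub `s` originated at city `i` equals `∑ j, d i j * |x i s - x j s|`. -/
theorem stmt0 (n k : ℕ) (d : Fin n → Fin n → ℝ) (x : Fin n → Fin k → ℝ)
    (hd : ∀ i j, 0 ≤ d i j)
    (hx01 : ∀ i s, x i s = 0 ∨ x i s = 1)
    (hxsum : ∀ i, ∑ s, x i s = 1)
    (Y : Fin n → Fin k → Fin k → ℝ)
    (hY : ∀ i s t, s ≠ t → Y i s t = x i s * ∑ j, d i j * x j t)
    (i : Fin n) (s : Fin k) :
    (∑ t ∈ univ.filter (· ≠ s), Y i s t) + (∑ t ∈ univ.filter (· ≠ s), Y i t s)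
      = ∑ j, d i j * |x i s - x j s| :=
  stmt0_general n k d x hx01 hxsum Y hY i s
end

section
/- Let u be a random point uniformly distributed on the standard (k−1)-dimensional simplex Δ_k, and for x ∈ Δ_k let the geometric rounding assign x to vertex v_s if u lies in the polyhedron A_{x,s} with vertices {x, v_1, …, v_{s−1}, v_{s+1}, …, v_k}. Then for every x ∈ Δ_k and every coordinate s, the probability that x is rounded to vertex v_s equals x_s; equivalently, E[x̂] = x where x̂ is the rounded (vertex-valued) random vector. -/
/-!
The linear map `z ↦ z + z_s • (x - v_s)` sends `v_s` to `x` and fixes the other vertices, so it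
maps `Δ_k` onto `A_{x,s}`. It preserves the direction `{z | ∑ z = 0}` of the affine hull of
`Δ_k`, and on it equals the identity plus a rank-one map, with determinant `1 + (x_s - 1) = x_s`.
Since `μH[k - 1]` is a Haar measure on that `(k - 1)`-dimensional subspace and is invariant under
the isometric embedding of each of its translates, it scales by exactly this determinant.
-/

open MeasureTheory Module

def simplexVertex (k : ℕ) (s : Fin k) : Fin k → ℝ := fun t => if t = s then 1 else 0

/-- The rounding region `A_{x,s}`: the convex hull of `x` together with all
vertices of the simplex except `v_s`. -/
def roundRegion (k : ℕ) (x : Fin k → ℝ) (s : Fin k) : Set (Fin k → ℝ) :=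
  convexHull ℝ ({x} ∪ {v | ∃ t : Fin k, t ≠ s ∧ v = simplexVertex k t})

theorem LinearMap.det_id_add_smulRight {R M : Type*} [CommRing R] [AddCommGroup M] [Module R M]
    [Module.Free R M] [Module.Finite R M] (φ : M →ₗ[R] R) (w : M) :
    LinearMap.det (LinearMap.id + φ.smulRight w) = 1 + φ w := by
  classical
  let b := Module.Free.chooseBasis R M
  have hrank : LinearMap.toMatrix b b (φ.smulRight w)
      = Matrix.replicateCol Unit (b.repr w) * Matrix.replicateRow Unit (fun j => φ (b j)) := by
    ext i j
    simp [LinearMap.toMatrix_apply, Matrix.mul_apply, mul_comm]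
  rw [← LinearMap.det_toMatrix b, map_add, LinearMap.toMatrix_id, hrank,
    Matrix.det_one_add_replicateCol_mul_replicateRow]
  conv_rhs => rw [← b.sum_repr w]
  simp only [dotProduct, map_sum, map_smul, smul_eq_mul, mul_comm]

theorem hausdorffMeasure_image_linearMap_of_sub_mem
    {E : Type*} [NormedAddCommGroup E] [NormedSpace ℝ E] [MeasurableSpace E] [BorelSpace E]
    (V : Submodule ℝ E) [FiniteDimensional ℝ V] (f : E →ₗ[ℝ] E) (hf : ∀ v ∈ V, f v ∈ V)
    (p : E) {S : Set E} (hS : ∀ z ∈ S, z - p ∈ V) :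
    μH[finrank ℝ V] (f '' S)
      = ENNReal.ofReal |LinearMap.det (f.restrict hf)| * μH[finrank ℝ V] S := by
  set S' : Set V := {w | p + w ∈ S}
  have hchart : ∀ q : E, Isometry fun w : V => q + (w : E) :=
    fun q => (isometry_add_left q).comp isometry_subtype_coe
  have hS' : S = (fun w : V => p + (w : E)) '' S' := by
    ext z
    refine ⟨fun hz => ⟨⟨z - p, hS z hz⟩, by simpa [S'] using hz, by simp⟩, ?_⟩
    rintro ⟨w, hw, rfl⟩
    exact hw
  have hfS : f '' S = (fun w : V => f p + (w : E)) '' (f.restrict hf '' S') := by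
    rw [hS', Set.image_image, Set.image_image]
    simp
  rw [hfS, hS', (hchart _).hausdorffMeasure_image (Or.inl (Nat.cast_nonneg _)),
    (hchart _).hausdorffMeasure_image (Or.inl (Nat.cast_nonneg _)),
    Measure.addHaar_image_linearMap]

section SumZero

variable (K ι : Type*) [Field K] [Fintype ι]

def sumZero : Submodule K (ι → K) := LinearMap.ker (∑ i, LinearMap.proj i)

variable {K ι}

theorem mem_sumZero {z : ι → K} : z ∈ sumZero K ι ↔ ∑ i, z i = 0 := by
  simp [sumZero]

theorem finrank_sumZero [Nonempty ι] : finrank K (sumZero K ι) = Fintype.card ι - 1 := by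
  classical
  let σ : (ι → K) →ₗ[K] K := ∑ i, LinearMap.proj i
  have hσ : LinearMap.range σ = ⊤ := by
    refine LinearMap.range_eq_top.mpr fun c => ⟨Pi.single (Classical.arbitrary ι) c, ?_⟩
    simp [σ]
  have := LinearMap.finrank_range_add_finrank_ker σ
  rw [hσ, finrank_top, finrank_self, finrank_fintype_fun_eq_card] at this
  change finrank K (LinearMap.ker σ) = _
  omega

end SumZero

section ReplaceVertex

variable {ι : Type*} [DecidableEq ι]

def replaceVertex (x : ι → ℝ) (s : ι) : (ι → ℝ) →ₗ[ℝ] (ι → ℝ) :=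
  LinearMap.id + (LinearMap.proj s).smulRight (x - Pi.single s 1)

theorem replaceVertex_single (x : ι → ℝ) (s t : ι) :
    replaceVertex x s (Pi.single t 1) = if t = s then x else Pi.single t 1 := by
  by_cases h : t = s
  · subst h; simp [replaceVertex]
  · simp [replaceVertex, h, Ne.symm h]

theorem sub_single_mem_sumZero [Fintype ι] {x : ι → ℝ} (hx : ∑ i, x i = 1) (s : ι) :
    x - Pi.single s 1 ∈ sumZero ℝ ι := by
  simp [mem_sumZero, Finset.sum_sub_distrib, hx]

theorem replaceVertex_mem_sumZero [Fintype ι] {x : ι → ℝ} (hx : ∑ i, x i = 1) (s : ι) :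
    ∀ v ∈ sumZero ℝ ι, replaceVertex x s v ∈ sumZero ℝ ι := fun _ hv =>
  add_mem hv (Submodule.smul_mem _ _ (sub_single_mem_sumZero hx s))

theorem det_restrict_replaceVertex [Fintype ι] {x : ι → ℝ} (hx : ∑ i, x i = 1) (s : ι) :
    LinearMap.det ((replaceVertex x s).restrict (replaceVertex_mem_sumZero hx s)) = x s := by
  have hrestrict : (replaceVertex x s).restrict (replaceVertex_mem_sumZero hx s)
      = LinearMap.id + ((LinearMap.proj s).comp (sumZero ℝ ι).subtype).smulRight
          ⟨x - Pi.single s 1, sub_single_mem_sumZero hx s⟩ := by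
    ext v : 2
    simp [replaceVertex]
  rw [hrestrict, LinearMap.det_id_add_smulRight]
  simp

end ReplaceVertex

theorem roundRegion_eq_image (k : ℕ) (x : Fin k → ℝ) (s : Fin k) :
    roundRegion k x s = replaceVertex x s '' stdSimplex ℝ (Fin k) := by
  have hbasis : (fun t u : Fin k => if t = u then (1 : ℝ) else 0) = fun t => Pi.single t 1 := by
    ext t u; simp [Pi.single_apply, eq_comm]
  have hvertex : simplexVertex k = fun t => Pi.single t 1 := by
    ext t u; simp [simplexVertex, Pi.single_apply]
  rw [← convexHull_basis_eq_stdSimplex, LinearMap.image_convexHull, roundRegion, ← Set.range_comp,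
    hbasis]
  congr 1
  ext v
  simp only [hvertex, Set.mem_union, Set.mem_singleton_iff,
    Set.mem_ofPred_eq, Set.mem_range, Function.comp_apply, replaceVertex_single]
  constructor
  · rintro (rfl | ⟨t, ht, rfl⟩)
    · exact ⟨s, if_pos rfl⟩
    · exact ⟨t, if_neg ht⟩
  · rintro ⟨t, rfl⟩
    split_ifs with ht
    exacts [Or.inl rfl, Or.inr ⟨t, ht, rfl⟩]

/-- The probability that a uniform random point of the simplex lies in the region
`A_{x,s}` equals `x_s`: the `(k-1)`-dimensional volume of `A_{x,s}` is `x_s`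
times the volume of the simplex. -/
theorem stmt3 (k : ℕ) (x : Fin k → ℝ) (hx : x ∈ stdSimplex ℝ (Fin k)) (s : Fin k) :
    μH[(k : ℝ) - 1] (roundRegion k x s)
      = ENNReal.ofReal (x s) * μH[(k : ℝ) - 1] (stdSimplex ℝ (Fin k)) := by
  have : Nonempty (Fin k) := ⟨s⟩
  have hdim : (k : ℝ) - 1 = finrank ℝ (sumZero ℝ (Fin k)) := by
    rw [finrank_sumZero, Fintype.card_fin, Nat.cast_pred s.pos]
  rw [hdim, roundRegion_eq_image, hausdorffMeasure_image_linearMap_of_sub_mem _ _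
      (replaceVertex_mem_sumZero hx.2 s) (Pi.single s 1) fun z hz => sub_single_mem_sumZero hz.2 s,
    det_restrict_replaceVertex hx.2 s, abs_of_nonneg (hx.1 s)]
end

section
/- The optimal value of LP2 (the relaxation of MILP2) is less than or equal to the optimal value of LP2' (LP2 augmented with the validity constraints Σ_{t≠s}Y^i_{st} + Σ_{t≠s}Y^i_{ts} = Σ_j d_{ij} y_{ijs}, |x_{is} − x_{js}| ≤ y_{ijs}), which is less than or equal to the optimal value of MILP2' over binary x; moreover every feasible binary solution of the FHSAP (with canonical flows) is feasible for LP2', so LP2' is a valid relaxation of FHSAP. -/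
/-!
For a binary assignment `x` the canonical flow `Y^i_{st} = x_{is} F_{it}`, with
`F_{it} = Σ_j d_{ij} x_{jt}`, leaves hub `s` with total `x_{is} (O_i - F_{is})` and enters it
with total `(1 - x_{is}) F_{is}`. Their difference is the right-hand side of the LP2 flow
conservation, and their sum `Σ_j d_{ij} (x_{is} + x_{js} - 2 x_{is} x_{js})` equals
`Σ_j d_{ij} |x_{is} - x_{js}|` because the `x`'s are `0` or `1`. So binary solutions are
LP2'-feasible; the single-hub assignment shows the feasible sets are nonempty, nonnegative costs
bound every objective value below by `0`, and the chain of inclusions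
MILP2' ⊆ LP2' ⊆ LP2 of feasible values reverses into the chain of infima.
-/

open Finset

section

variable (n k : ℕ) (d : Fin n → Fin n → ℝ) (c : Fin n → Fin k → ℝ)
  (ch : Fin k → Fin k → ℝ)

/-- Objective of the flow formulation (MILP2 / LP2 and their variants). -/
def lp2Obj (x : Fin n → Fin k → ℝ) (Y : Fin n → Fin k → Fin k → ℝ) : ℝ :=
  (∑ i, ∑ s, c i s * ((∑ j, d i j) + (∑ j, d j i)) * x i s)
    + ∑ i, ∑ s, ∑ t ∈ univ.filter (· ≠ s), ch s t * Y i s t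

/-- Feasibility for the relaxation LP2. -/
def lp2Feas (x : Fin n → Fin k → ℝ) (Y : Fin n → Fin k → Fin k → ℝ) : Prop :=
  (∀ i s, 0 ≤ x i s) ∧ (∀ i, ∑ s, x i s = 1) ∧ (∀ i s t, 0 ≤ Y i s t) ∧
    (∀ i s, (∑ t ∈ univ.filter (· ≠ s), Y i s t)
        - (∑ t ∈ univ.filter (· ≠ s), Y i t s)
      = (∑ j, d i j) * x i s - ∑ j, d i j * x j s)

/-- Feasibility for LP2', i.e. LP2 augmented with the validity constraints. -/
def lp2'Feas (x : Fin n → Fin k → ℝ) (Y : Fin n → Fin k → Fin k → ℝ)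
    (y : Fin n → Fin n → Fin k → ℝ) : Prop :=
  lp2Feas n k d x Y ∧ (∀ i j s, 0 ≤ y i j s) ∧
    (∀ i j s, x i s - x j s ≤ y i j s) ∧ (∀ i j s, x j s - x i s ≤ y i j s) ∧
    (∀ i s, (∑ t ∈ univ.filter (· ≠ s), Y i s t)
        + (∑ t ∈ univ.filter (· ≠ s), Y i t s) = ∑ j, d i j * y i j s)

/-- Binary (integrality) constraint on the assignment variables. -/
def binAssign (x : Fin n → Fin k → ℝ) : Prop := ∀ i s, x i s = 0 ∨ x i s = 1

end

lemma Finset.sum_filter_ne_eq_sub {ι M : Type*} [Fintype ι] [DecidableEq ι] [AddCommGroup M]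
    (f : ι → M) (s : ι) : ∑ t ∈ univ.filter (· ≠ s), f t = ∑ t, f t - f s := by
  rw [filter_ne', sum_erase_eq_sub (mem_univ s)]

lemma abs_sub_eq_of_binary {α : Type*} [Ring α] [LinearOrder α] [IsOrderedRing α] {a b : α}
    (ha : a = 0 ∨ a = 1) (hb : b = 0 ∨ b = 1) :
    |a - b| = a + b - 2 * (a * b) := by
  rcases ha with rfl | rfl <;> rcases hb with rfl | rfl <;> norm_num

lemma binAssign.nonneg {n k : ℕ} {x : Fin n → Fin k → ℝ} (hb : binAssign n k x) (i : Fin n)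
    (s : Fin k) : 0 ≤ x i s := by
  rcases hb i s with h | h <;> simp [h]

lemma exists_binAssign_of_pos {n k : ℕ} (hk : 0 < k) :
    ∃ x : Fin n → Fin k → ℝ, binAssign n k x ∧ ∀ i, ∑ s, x i s = 1 :=
  ⟨fun _ s => if s = ⟨0, hk⟩ then 1 else 0,
    fun i s => by by_cases h : s = ⟨0, hk⟩ <;> simp [h],
    fun i => by simp⟩

lemma lp2Obj_nonneg {n k : ℕ} {d : Fin n → Fin n → ℝ} {c : Fin n → Fin k → ℝ}
    {ch : Fin k → Fin k → ℝ} (hd : ∀ i j, 0 ≤ d i j) (hc : ∀ i s, 0 ≤ c i s)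
    (hch : ∀ s t, 0 ≤ ch s t) {x : Fin n → Fin k → ℝ}
    {Y : Fin n → Fin k → Fin k → ℝ}
    (hx : ∀ i s, 0 ≤ x i s) (hY : ∀ i s t, 0 ≤ Y i s t) :
    0 ≤ lp2Obj n k d c ch x Y := by
  have hdeg : ∀ i, 0 ≤ (∑ j, d i j) + ∑ j, d j i := fun i =>
    add_nonneg (sum_nonneg fun j _ => hd i j) (sum_nonneg fun j _ => hd j i)
  exact add_nonneg
    (sum_nonneg fun i _ => sum_nonneg fun s _ => mul_nonneg (mul_nonneg (hc i s) (hdeg i)) (hx i s))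
    (sum_nonneg fun i _ => sum_nonneg fun s _ => sum_nonneg fun t _ =>
      mul_nonneg (hch s t) (hY i s t))

section CanonicalFlow

variable {n k : ℕ} (d : Fin n → Fin n → ℝ) {x : Fin n → Fin k → ℝ}

lemma canonical_outflow (hx : ∀ i, ∑ s, x i s = 1) (i : Fin n) (s : Fin k) :
    ∑ t ∈ univ.filter (· ≠ s), x i s * ∑ j, d i j * x j t
      = x i s * (∑ j, d i j) - x i s * ∑ j, d i j * x j s := by
  have htotal : ∑ t, ∑ j, d i j * x j t = ∑ j, d i j := by
    rw [sum_comm]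
    simp only [← mul_sum, hx, mul_one]
  rw [← mul_sum, sum_filter_ne_eq_sub, htotal, mul_sub]

lemma canonical_inflow (hx : ∀ i, ∑ s, x i s = 1) (i : Fin n) (s : Fin k) :
    ∑ t ∈ univ.filter (· ≠ s), x i t * ∑ j, d i j * x j s
      = (1 - x i s) * ∑ j, d i j * x j s := by
  rw [← sum_mul, sum_filter_ne_eq_sub, hx]

lemma lp2'Feas_canonical (hd : ∀ i j, 0 ≤ d i j) (hb : binAssign n k x)
    (hx : ∀ i, ∑ s, x i s = 1) :
    lp2'Feas n k d x (fun i s t => x i s * ∑ j, d i j * x j t)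
      (fun i j s => |x i s - x j s|) := by
  refine ⟨⟨hb.nonneg, hx, fun i s t => ?_, fun i s => ?_⟩, fun _ _ _ => abs_nonneg _,
    fun _ _ _ => le_abs_self _, fun _ _ _ => (le_abs_self _).trans_eq (abs_sub_comm _ _),
    fun i s => ?_⟩
  · exact mul_nonneg (hb.nonneg i s) (sum_nonneg fun j _ => mul_nonneg (hd i j) (hb.nonneg j t))
  · rw [canonical_outflow d hx, canonical_inflow d hx]
    ring
  · show _ = ∑ j, d i j * |x i s - x j s|
    calc _ = x i s * (∑ j, d i j) + (∑ j, d i j * x j s)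
          - 2 * x i s * ∑ j, d i j * x j s := by
          rw [canonical_outflow d hx, canonical_inflow d hx]
          ring
      _ = ∑ j, (x i s * d i j + d i j * x j s - 2 * x i s * (d i j * x j s)) := by
          simp only [sum_sub_distrib, sum_add_distrib, mul_sum]
      _ = _ := sum_congr rfl fun j _ => by
          rw [abs_sub_eq_of_binary (hb i s) (hb j s)]
          ring

end CanonicalFlow

/-- `opt LP2 ≤ opt LP2' ≤ opt MILP2'`, and every binary FHSAP assignment with
canonical flows is feasible for LP2', so LP2' is a valid relaxation of FHSAP. -/
theorem stmt11 (n k : ℕ) (hk : 0 < k) (d : Fin n → Fin n → ℝ)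
    (c : Fin n → Fin k → ℝ) (ch : Fin k → Fin k → ℝ)
    (hd : ∀ i j, 0 ≤ d i j) (hc : ∀ i s, 0 ≤ c i s) (hch : ∀ s t, 0 ≤ ch s t) :
    (sInf {v : ℝ | ∃ x Y, lp2Feas n k d x Y ∧ v = lp2Obj n k d c ch x Y}
        ≤ sInf {v : ℝ | ∃ x Y y, lp2'Feas n k d x Y y ∧ v = lp2Obj n k d c ch x Y})
    ∧ (sInf {v : ℝ | ∃ x Y y, lp2'Feas n k d x Y y ∧ v = lp2Obj n k d c ch x Y}
        ≤ sInf {v : ℝ | ∃ x Y y, lp2'Feas n k d x Y y ∧ binAssign n k x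
            ∧ v = lp2Obj n k d c ch x Y})
    ∧ (∀ x : Fin n → Fin k → ℝ, binAssign n k x → (∀ i, ∑ s, x i s = 1) →
        lp2'Feas n k d x (fun i s t => x i s * ∑ j, d i j * x j t)
          (fun i j s => |x i s - x j s|)) := by
  obtain ⟨x₀, hb₀, hx₀⟩ := exists_binAssign_of_pos (n := n) hk
  have hfeas₀ := lp2'Feas_canonical d hd hb₀ hx₀
  have hbdd : BddBelow {v : ℝ | ∃ x Y, lp2Feas n k d x Y ∧ v = lp2Obj n k d c ch x Y} :=
    ⟨0, by rintro _ ⟨x, Y, ⟨hx, -, hY, -⟩, rfl⟩; exact lp2Obj_nonneg hd hc hch hx hY⟩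
  have hsub : {v : ℝ | ∃ x Y y, lp2'Feas n k d x Y y ∧ v = lp2Obj n k d c ch x Y}
      ⊆ {v : ℝ | ∃ x Y, lp2Feas n k d x Y ∧ v = lp2Obj n k d c ch x Y} := by
    rintro _ ⟨x, Y, _, hF, rfl⟩
    exact ⟨x, Y, hF.1, rfl⟩
  refine ⟨csInf_le_csInf hbdd ⟨_, _, _, _, hfeas₀, rfl⟩ hsub,
    csInf_le_csInf (hbdd.mono hsub) ⟨_, _, _, _, hfeas₀, hb₀, rfl⟩ ?_,
    fun x hb hx => lp2'Feas_canonical d hd hb hx⟩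
  rintro _ ⟨x, Y, y, hF, -, rfl⟩
  exact ⟨x, Y, y, hF, rfl⟩
end
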